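/- arXiv:1002.0367 — 2 statements merged into one kernel-verified Lean document; each statement's English description precedes it below -/
import Mathlib

section
/- Every finite constrained potential game has at least one constrained Nash equilibrium; in particular, any maximizer of the potential function is a constrained Nash equilibrium. -/
/-- Every finite constrained potential game has at least one constrained Nash
equilibrium; in particular, any maximizer of the potential function is a
constrained Nash equilibrium. -/
theorem stmt_2 {ι : Type*} [Fintype ι] [DecidableEq ι]
    (A : ι → Type*) [∀ i, Fintype (A i)] [∀ i, Nonempty (A i)]
    (u : ∀ _ : ι, (∀ j, A j) → ℝ)
    (F : ∀ i : ι, (∀ j, A j) → Set (A i))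
    (hF : ∀ (i : ι) (s : ∀ j, A j), (F i s).Nonempty)
    (φ : (∀ j, A j) → ℝ)
    (hpot : ∀ (i : ι) (s : ∀ j, A j) (si' : A i), si' ∈ F i s →
      φ s - φ (Function.update s i si') = u i s - u i (Function.update s i si')) :
    (∃ sstar : ∀ j, A j, ∀ (i : ι) (si : A i), si ∈ F i sstar →
      u i (Function.update sstar i si) ≤ u i sstar) ∧
    (∀ sstar : ∀ j, A j, (∀ s : ∀ j, A j, φ s ≤ φ sstar) →
      ∀ (i : ι) (si : A i), si ∈ F i sstar →
        u i (Function.update sstar i si) ≤ u i sstar) := by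
  have key : ∀ sstar : ∀ j, A j, (∀ s : ∀ j, A j, φ s ≤ φ sstar) →
      ∀ (i : ι) (si : A i), si ∈ F i sstar →
        u i (Function.update sstar i si) ≤ u i sstar := by
    intro sstar hmax i si hsi
    have h := hpot i sstar si hsi
    have := hmax (Function.update sstar i si)
    linarith
  obtain ⟨sstar, hs⟩ := Finite.exists_max φ
  exact ⟨⟨sstar, key sstar hs⟩, key⟩
end

section
/- The coverage game is a constrained potential game with potential φ(s) = Σ_{q∈Q} Σ_{ℓ=1}^{n_q(s)} W_q/ℓ − Σᵢ fᵢ(cᵢ): for any player i, any profile s = (sᵢ,s₋ᵢ) and any feasible deviation sᵢ', φ(sᵢ,s₋ᵢ) − φ(sᵢ',s₋ᵢ) = uᵢ(sᵢ,s₋ᵢ) − uᵢ(sᵢ',s₋ᵢ). -/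
open Finset

/-- Number of players covering point `q` under profile `s`. -/
def nCov {ι Q : Type*} [Fintype ι] [DecidableEq Q] {A : ι → Type*}
    (D : ∀ i, A i → Finset Q) (s : ∀ i, A i) (q : Q) : ℕ :=
  (Finset.univ.filter fun i => q ∈ D i (s i)).card

/-- Coverage-game utility of player `i`. -/
noncomputable def covUtil {ι Q : Type*} [Fintype ι] [DecidableEq Q] {A : ι → Type*}
    (W : Q → ℝ) (D : ∀ i, A i → Finset Q) (f : ∀ i, A i → ℝ)
    (i : ι) (s : ∀ j, A j) : ℝ :=
  (∑ q ∈ D i (s i), W q / (nCov D s q : ℝ)) - f i (s i)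

/-- The potential function of the coverage game. -/
noncomputable def covPot {ι Q : Type*} [Fintype ι] [Fintype Q] [DecidableEq Q] {A : ι → Type*}
    (W : Q → ℝ) (D : ∀ i, A i → Finset Q) (f : ∀ i, A i → ℝ)
    (s : ∀ j, A j) : ℝ :=
  (∑ q : Q, ∑ ℓ ∈ Finset.range (nCov D s q), W q / ((ℓ : ℝ) + 1)) - ∑ i, f i (s i)

/-- The coverage game is a constrained potential game with potential `covPot`. -/
theorem stmt_3 {ι Q : Type*} [Fintype ι] [DecidableEq ι] [Fintype Q] [DecidableEq Q]
    {A : ι → Type*}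
    (W : Q → ℝ) (hW : ∀ q, 0 ≤ W q)
    (D : ∀ i, A i → Finset Q) (f : ∀ i, A i → ℝ) (hf : ∀ i a, 0 ≤ f i a)
    (F : ∀ i : ι, (∀ j, A j) → Set (A i)) :
    ∀ (i : ι) (s : ∀ j, A j) (si' : A i), si' ∈ F i s →
      covPot W D f s - covPot W D f (Function.update s i si')
        = covUtil W D f i s - covUtil W D f i (Function.update s i si') := by
  intro i s si' _
  set t := Function.update s i si' with ht
  have hti : t i = si' := Function.update_self i si' s
  have htj : ∀ j, j ≠ i → t j = s j := fun j hj => Function.update_of_ne hj si' s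
  set m : Q → ℕ := fun q => ∑ j ∈ Finset.univ.erase i, (if q ∈ D j (s j) then 1 else 0)
    with hmdef
  have hm : ∀ q, nCov D s q = m q + (if q ∈ D i (s i) then 1 else 0) := by
    intro q
    rw [nCov, Finset.card_filter, ← Finset.sum_erase_add _ _ (Finset.mem_univ i)]
  have hm' : ∀ q, nCov D t q = m q + (if q ∈ D i si' then 1 else 0) := by
    intro q
    rw [nCov, Finset.card_filter, ← Finset.sum_erase_add _ _ (Finset.mem_univ i), hti]
    congr 1
    exact Finset.sum_congr rfl fun j hj => by rw [htj j (Finset.ne_of_mem_erase hj)]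
  have key : ∀ q, (∑ ℓ ∈ Finset.range (nCov D s q), W q / ((ℓ : ℝ) + 1))
      - (∑ ℓ ∈ Finset.range (nCov D t q), W q / ((ℓ : ℝ) + 1))
      = (if q ∈ D i (s i) then W q / ((m q : ℝ) + 1) else 0)
        - (if q ∈ D i si' then W q / ((m q : ℝ) + 1) else 0) := by
    intro q
    rw [hm q, hm' q]
    by_cases h1 : q ∈ D i (s i) <;> by_cases h2 : q ∈ D i si' <;>
      simp [h1, h2, Finset.sum_range_succ]
  have hu1 : ∑ q ∈ D i (s i), W q / (nCov D s q : ℝ)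
      = ∑ q : Q, (if q ∈ D i (s i) then W q / ((m q : ℝ) + 1) else 0) := by
    rw [Finset.sum_ite_mem, Finset.univ_inter]
    refine Finset.sum_congr rfl fun q hq => ?_
    rw [hm q, if_pos hq]
    push_cast
    ring
  have hu2 : ∑ q ∈ D i (t i), W q / (nCov D t q : ℝ)
      = ∑ q : Q, (if q ∈ D i si' then W q / ((m q : ℝ) + 1) else 0) := by
    rw [hti, Finset.sum_ite_mem, Finset.univ_inter]
    refine Finset.sum_congr rfl fun q hq => ?_
    rw [hm' q, if_pos hq]
    push_cast
    ring
  have hfs : ∑ j, f j (s j) = (∑ j ∈ Finset.univ.erase i, f j (s j)) + f i (s i) :=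
    (Finset.sum_erase_add _ _ (Finset.mem_univ i)).symm
  have hft : ∑ j, f j (t j) = (∑ j ∈ Finset.univ.erase i, f j (s j)) + f i si' := by
    rw [← Finset.sum_erase_add _ _ (Finset.mem_univ i), hti]
    congr 1
    exact Finset.sum_congr rfl fun j hj => by rw [htj j (Finset.ne_of_mem_erase hj)]
  have hAB : (∑ q : Q, ∑ ℓ ∈ Finset.range (nCov D s q), W q / ((ℓ : ℝ) + 1))
      - (∑ q : Q, ∑ ℓ ∈ Finset.range (nCov D t q), W q / ((ℓ : ℝ) + 1))
      = (∑ q : Q, (if q ∈ D i (s i) then W q / ((m q : ℝ) + 1) else 0))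
        - ∑ q : Q, (if q ∈ D i si' then W q / ((m q : ℝ) + 1) else 0) := by
    rw [← Finset.sum_sub_distrib, ← Finset.sum_sub_distrib]
    exact Finset.sum_congr rfl fun q _ => key q
  rw [covPot, covPot, covUtil, covUtil, hu1, hu2, hfs, hft, hti]
  linarith [hAB]
end
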